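/- Let n be a nonnegative integer, let u > −1 and v > −1 be real numbers, and let x be a real number. Then B(v, v/2) · ∑_{k=0}^{n} (−1)^{n−k} · C(n,k) · 2^{−2k} · B(2k+u, (2k+u)/2) · B((2k+u+v)/2, v/2)^{−1} · (1−x)^{n−k} = B(u, u/2) · ∑_{k=0}^{n} (−1)^k · C(n,k) · 2^{−2k} · B(2k+v, (2k+v)/2) · B((2k+u+v)/2, u/2)^{−1} · x^{n−k}. -/

import Mathlib

open Real

/-- Generalized binomial coefficient `B(a,b) = Γ(a+1)/(Γ(b+1)·Γ(a−b+1))`. -/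
noncomputable def gbinom (a b : ℝ) : ℝ :=
  Real.Gamma (a + 1) / (Real.Gamma (b + 1) * Real.Gamma (a - b + 1))

open MeasureTheory ProbabilityTheory Finset

/-!
Legendre's duplication formula gives `gbinom (2 * s) s = 2^(2s) Γ(s + 1/2) / (√π Γ(s + 1))`,
which turns both sides, up to the common factor `2^(u+v) / π`, into sums of Euler beta values
`beta (k + a) b` and `beta a (k + b)` with `a = (u + 1)/2`, `b = (v + 1)/2`. Writing
`beta a b = ∫₀¹ t^(a-1) (1-t)^(b-1) dt`, both sums become the integral of `t^(a-1) (1-t)^(b-1)`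
against one polynomial, `(t - (1 - x))^n = (x - (1 - t))^n`, expanded binomially in `t` on one
side and in `1 - t` on the other.
-/

lemma ofReal_rpow_mul_one_sub_rpow {a b t : ℝ} (ht : t ∈ Set.Icc (0 : ℝ) 1) :
    ((t ^ (a - 1) * (1 - t) ^ (b - 1) : ℝ) : ℂ)
      = (t : ℂ) ^ ((a : ℂ) - 1) * (1 - (t : ℂ)) ^ ((b : ℂ) - 1) := by
  rw [Complex.ofReal_mul, Complex.ofReal_cpow ht.1, Complex.ofReal_cpow (sub_nonneg.2 ht.2)]
  push_cast
  rfl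

lemma intervalIntegrable_rpow_mul_one_sub_rpow {a b : ℝ} (ha : 0 < a) (hb : 0 < b) :
    IntervalIntegrable (fun t : ℝ ↦ t ^ (a - 1) * (1 - t) ^ (b - 1)) volume 0 1 := by
  have hc := Complex.betaIntegral_convergent (u := a) (v := b) (by simpa) (by simpa)
  refine (show IntervalIntegrable _ volume 0 1 from ⟨hc.1.re, hc.2.re⟩).congr fun t ht ↦ ?_
  rw [Set.uIoc_of_le zero_le_one] at ht
  rw [← ofReal_rpow_mul_one_sub_rpow (Set.Ioc_subset_Icc_self ht), RCLike.re_to_complex,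
    Complex.ofReal_re]

lemma beta_eq_integral {a b : ℝ} (ha : 0 < a) (hb : 0 < b) :
    beta a b = ∫ t in (0 : ℝ)..1, t ^ (a - 1) * (1 - t) ^ (b - 1) := by
  have hΓ := Complex.Gamma_mul_Gamma_eq_betaIntegral (s := a) (t := b) (by simpa) (by simpa)
  rw [Complex.betaIntegral, ← intervalIntegral.integral_congr fun t ht ↦
    ofReal_rpow_mul_one_sub_rpow (a := a) (b := b) (by rwa [Set.uIcc_of_le zero_le_one] at ht),
    intervalIntegral.integral_ofReal, ← Complex.ofReal_add, Complex.Gamma_ofReal,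
    Complex.Gamma_ofReal, Complex.Gamma_ofReal] at hΓ
  rw [beta, div_eq_iff (Real.Gamma_pos_of_pos (add_pos ha hb)).ne']
  exact_mod_cast hΓ.trans (mul_comm _ _)

lemma beta_comm (a b : ℝ) : beta a b = beta b a := by
  rw [beta, beta, mul_comm, add_comm]

lemma sum_mul_beta_add_left {a b : ℝ} (ha : 0 < a) (hb : 0 < b) (s : Finset ℕ)
    (c : ℕ → ℝ) :
    ∑ k ∈ s, c k * beta (k + a) b
      = ∫ t in (0 : ℝ)..1, t ^ (a - 1) * (1 - t) ^ (b - 1) * ∑ k ∈ s, c k * t ^ k := by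
  have hka (k : ℕ) : 0 < (k : ℝ) + a := by positivity
  simp_rw [beta_eq_integral (hka _) hb, ← intervalIntegral.integral_const_mul, mul_sum]
  rw [← intervalIntegral.integral_finsetSum fun k _ ↦
    (intervalIntegrable_rpow_mul_one_sub_rpow (hka k) hb).const_mul (c k)]
  refine intervalIntegral.integral_congr_ae (Filter.Eventually.of_forall fun t ht ↦ ?_)
  rw [Set.uIoc_of_le zero_le_one] at ht
  refine sum_congr rfl fun k _ ↦ ?_
  rw [add_sub_assoc, Real.rpow_add ht.1, Real.rpow_natCast]
  ring

lemma sum_mul_beta_add_right {a b : ℝ} (ha : 0 < a) (hb : 0 < b) (s : Finset ℕ)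
    (c : ℕ → ℝ) :
    ∑ k ∈ s, c k * beta a (k + b)
      = ∫ t in (0 : ℝ)..1,
          t ^ (a - 1) * (1 - t) ^ (b - 1) * ∑ k ∈ s, c k * (1 - t) ^ k := by
  simp_rw [beta_comm a, sum_mul_beta_add_left hb ha]
  simpa [mul_comm] using (intervalIntegral.integral_comp_sub_left (a := 0) (b := 1)
    (fun t ↦ t ^ (b - 1) * (1 - t) ^ (a - 1) * ∑ k ∈ s, c k * t ^ k) 1).symm

lemma gbinom_two_mul_self (s : ℝ) :
    gbinom (2 * s) s = 2 ^ (2 * s) * Gamma (s + 1 / 2) / (√π * Gamma (s + 1)) := by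
  have hdup := Real.Gamma_mul_Gamma_add_half (s + 1 / 2)
  rw [show s + 1 / 2 + 1 / 2 = s + 1 by ring, show 2 * (s + 1 / 2) = 2 * s + 1 by ring,
    show 1 - (2 * s + 1) = -(2 * s) by ring, Real.rpow_neg zero_le_two] at hdup
  rw [gbinom, show 2 * s - s + 1 = s + 1 by ring]
  have hπ : √π ≠ 0 := (Real.sqrt_pos.2 pi_pos).ne'
  have hΓ : Gamma (2 * s + 1) = 2 ^ (2 * s) * Gamma (s + 1 / 2) * Gamma (s + 1) / √π := by
    rw [eq_div_iff hπ, mul_assoc _ (Gamma _), hdup]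
    field_simp
  rcases eq_or_ne (Gamma (s + 1)) 0 with h | h
  · simp [h]
  · rw [hΓ]
    field_simp

lemma gbinom_mul_inv_gbinom_mul_gbinom {u v : ℝ} (hu : -2 < u) (hv : -2 < v) :
    gbinom u (u / 2) * (gbinom ((u + v) / 2) (v / 2))⁻¹ * gbinom v (v / 2)
      = 2 ^ (u + v) / π * beta ((u + 1) / 2) ((v + 1) / 2) := by
  have hΓu : Gamma (u / 2 + 1) ≠ 0 := (Gamma_pos_of_pos (by linarith)).ne'
  have hΓv : Gamma (v / 2 + 1) ≠ 0 := (Gamma_pos_of_pos (by linarith)).ne'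
  have hBu := gbinom_two_mul_self (u / 2)
  have hBv := gbinom_two_mul_self (v / 2)
  rw [mul_div_cancel₀ _ two_ne_zero, show u / 2 + 1 / 2 = (u + 1) / 2 by ring] at hBu
  rw [mul_div_cancel₀ _ two_ne_zero, show v / 2 + 1 / 2 = (v + 1) / 2 by ring] at hBv
  rw [hBu, hBv, gbinom, beta, show (u + 1) / 2 + (v + 1) / 2 = (u + v) / 2 + 1 by ring,
    show (u + v) / 2 - v / 2 + 1 = u / 2 + 1 by ring, Real.rpow_add two_pos]
  -- `set` stops `field_simp` from rewriting `u / 2 + 1` to `(u + 2) / 2`, which would hide `hΓu`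
  set Γu := Gamma (u / 2 + 1)
  set Γv := Gamma (v / 2 + 1)
  field_simp
  rw [Real.sq_sqrt pi_pos.le]
  ring

lemma two_rpow_mul_gbinom_mul_inv_gbinom_mul_gbinom (k : ℕ) {u v : ℝ} (hu : -2 < u)
    (hv : -2 < v) :
    (2 : ℝ) ^ (-2 * (k : ℝ)) * gbinom (2 * k + u) ((2 * k + u) / 2)
        * (gbinom ((2 * k + u + v) / 2) (v / 2))⁻¹ * gbinom v (v / 2)
      = 2 ^ (u + v) / π * beta (k + (u + 1) / 2) ((v + 1) / 2) := by
  have hk : (0 : ℝ) ≤ k := k.cast_nonneg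
  rw [mul_assoc, mul_assoc, ← mul_assoc (gbinom _ _),
    gbinom_mul_inv_gbinom_mul_gbinom (by linarith) hv, ← mul_assoc, mul_div_assoc',
    ← Real.rpow_add two_pos, show (2 * k + u + 1) / 2 = k + (u + 1) / 2 by ring]
  ring_nf

lemma sub_pow_eq_sum_neg_one_pow_sub {R : Type*} [CommRing R] (x y : R) (n : ℕ) :
    (x - y) ^ n
      = ∑ k ∈ range (n + 1), (-1) ^ (n - k) * (n.choose k : R) * y ^ (n - k) * x ^ k := by
  rw [sub_eq_add_neg, add_pow]
  refine sum_congr rfl fun k _ ↦ ?_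
  rw [neg_pow]
  ring

lemma sub_pow_eq_sum_neg_one_pow {R : Type*} [CommRing R] (x y : R) (n : ℕ) :
    (x - y) ^ n = ∑ k ∈ range (n + 1), (-1) ^ k * (n.choose k : R) * x ^ (n - k) * y ^ k := by
  rw [sub_eq_neg_add, add_pow]
  refine sum_congr rfl fun k _ ↦ ?_
  rw [neg_pow]
  ring

theorem sum_choose_mul_beta_add_left_eq_sum_choose_mul_beta_add_right {a b : ℝ} (ha : 0 < a)
    (hb : 0 < b) (n : ℕ) (x : ℝ) :
    ∑ k ∈ range (n + 1),
        (-1) ^ (n - k) * (n.choose k : ℝ) * (1 - x) ^ (n - k) * beta (k + a) b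
      = ∑ k ∈ range (n + 1), (-1) ^ k * (n.choose k : ℝ) * x ^ (n - k) * beta a (k + b) := by
  rw [sum_mul_beta_add_left ha hb, sum_mul_beta_add_right ha hb]
  congr! 3 with t
  rw [← sub_pow_eq_sum_neg_one_pow_sub, ← sub_pow_eq_sum_neg_one_pow]
  ring

theorem polynomial_identity_uv_symmetric (n : ℕ) (u v : ℝ) (hu : u > -1) (hv : v > -1)
    (x : ℝ) :
    gbinom v (v / 2) *
      ∑ k ∈ Finset.range (n + 1),
        (-1 : ℝ) ^ (n - k) * (n.choose k : ℝ) * (2 : ℝ) ^ (-2 * (k : ℝ)) *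
          gbinom (2 * (k : ℝ) + u) ((2 * (k : ℝ) + u) / 2) *
          (gbinom ((2 * (k : ℝ) + u + v) / 2) (v / 2))⁻¹ * (1 - x) ^ (n - k)
    = gbinom u (u / 2) *
        ∑ k ∈ Finset.range (n + 1),
          (-1 : ℝ) ^ k * (n.choose k : ℝ) * (2 : ℝ) ^ (-2 * (k : ℝ)) *
            gbinom (2 * (k : ℝ) + v) ((2 * (k : ℝ) + v) / 2) *
            (gbinom ((2 * (k : ℝ) + u + v) / 2) (u / 2))⁻¹ * x ^ (n - k) := by
  have hL (k : ℕ) (_ : k ∈ range (n + 1)) : gbinom v (v / 2) *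
      ((-1 : ℝ) ^ (n - k) * (n.choose k : ℝ) * (2 : ℝ) ^ (-2 * (k : ℝ)) *
        gbinom (2 * (k : ℝ) + u) ((2 * (k : ℝ) + u) / 2) *
        (gbinom ((2 * (k : ℝ) + u + v) / 2) (v / 2))⁻¹ * (1 - x) ^ (n - k))
      = 2 ^ (u + v) / π * ((-1) ^ (n - k) * (n.choose k : ℝ) * (1 - x) ^ (n - k)
        * beta (k + (u + 1) / 2) ((v + 1) / 2)) := by
    linear_combination ((-1) ^ (n - k) * (n.choose k : ℝ) * (1 - x) ^ (n - k))
      * two_rpow_mul_gbinom_mul_inv_gbinom_mul_gbinom k (u := u) (v := v) (by linarith)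
        (by linarith)
  have hR (k : ℕ) (_ : k ∈ range (n + 1)) : gbinom u (u / 2) *
      ((-1 : ℝ) ^ k * (n.choose k : ℝ) * (2 : ℝ) ^ (-2 * (k : ℝ)) *
        gbinom (2 * (k : ℝ) + v) ((2 * (k : ℝ) + v) / 2) *
        (gbinom ((2 * (k : ℝ) + u + v) / 2) (u / 2))⁻¹ * x ^ (n - k))
      = 2 ^ (u + v) / π * ((-1) ^ k * (n.choose k : ℝ) * x ^ (n - k)
        * beta ((u + 1) / 2) (k + (v + 1) / 2)) := by
    rw [beta_comm, add_comm u v, show (2 * k + u + v) / 2 = (2 * (k : ℝ) + v + u) / 2 by ring]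
    linear_combination ((-1) ^ k * (n.choose k : ℝ) * x ^ (n - k))
      * two_rpow_mul_gbinom_mul_inv_gbinom_mul_gbinom k (u := v) (v := u) (by linarith)
        (by linarith)
  rw [mul_sum, mul_sum, sum_congr rfl hL, sum_congr rfl hR, ← mul_sum, ← mul_sum,
    sum_choose_mul_beta_add_left_eq_sum_choose_mul_beta_add_right (by linarith) (by linarith)]
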